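/- Let R be a unital ring with involution, a ∈ R regular with inner inverse a⁻ (a a⁻ a = a), and n ≥ 2. Then a is both core invertible and dual core invertible if and only if u = (a*)^n a + 1 - a⁻ a is invertible, if and only if v = a(a*)^n + 1 - a a⁻ is invertible. -/

import Mathlib

/-!
Put `d = (a*)ⁿ`, so that `u = 1 + (d - c) a` and `v = 1 + a (d - c)`. By Jacobson's lemma, `1 + xy`
and `1 + yx` are simultaneously left, right or two-sided invertible; this gives `u ∈ R⁻¹ ↔ v ∈ R⁻¹`
and lets us read left invertibility of `u` off `v`. Since `aca = a`, `u` is right invertible iff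
`a ∈ a d a R`, and `v` is left invertible iff `a ∈ R a d a`.

For `n ≥ 2` the last two conditions are together equivalent to the four conditions
`a ∈ R a* a`, `a ∈ a a* R`, `a ∈ a² R`, `a ∈ R a²`, and so is having both a core and a dual
core inverse: from the first, third and fourth one builds a core inverse of `a`, and a dual core
inverse of `a` is the adjoint of a core inverse of `a*`. A left ideal condition `b ∈ R e` is
written `star e ∣ star b` throughout, so that only right divisibility occurs.
-/

/-- `x` is the core inverse of `a`. -/
def IsCoreInverse {R : Type*} [Ring R] [StarRing R] (a x : R) : Prop :=
  a * x * a = a ∧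
    {y : R | ∃ r : R, y = x * r} = {y : R | ∃ r : R, y = a * r} ∧
    {y : R | ∃ r : R, y = r * x} = {y : R | ∃ r : R, y = r * star a}

/-- `x` is the dual core inverse of `a`. -/
def IsDualCoreInverse {R : Type*} [Ring R] [StarRing R] (a x : R) : Prop :=
  a * x * a = a ∧
    {y : R | ∃ r : R, y = r * x} = {y : R | ∃ r : R, y = r * a} ∧
    {y : R | ∃ r : R, y = x * r} = {y : R | ∃ r : R, y = star a * r}

section Monoid

variable {M : Type*} [Monoid M]

theorem setOf_exists_eq_mul_eq_iff {x b : M} :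
    {y | ∃ r, y = x * r} = {y | ∃ r, y = b * r} ↔ b ∣ x ∧ x ∣ b := by
  refine ⟨fun h => ⟨?_, ?_⟩, fun ⟨hbx, hxb⟩ => ?_⟩
  · exact (Set.ext_iff.1 h x).1 (dvd_refl x)
  · exact (Set.ext_iff.1 h b).2 (dvd_refl b)
  · ext y
    exact ⟨hbx.trans, hxb.trans⟩

theorem pow_dvd_self_of_mul_self_dvd {b : M} (h : b * b ∣ b) {n : ℕ} (hn : n ≠ 0) :
    b ^ n ∣ b := by
  induction n with
  | zero => exact absurd rfl hn
  | succ k ih =>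
    rcases eq_or_ne k 0 with rfl | hk
    · simp
    · calc b ^ (k + 1) = b * b ^ k := pow_succ' b k
        _ ∣ b * b := mul_dvd_mul_left b (ih hk)
        _ ∣ b := h

theorem pow_mul_dvd_pow_of_mul_dvd {b c : M} (h : b * c ∣ b) {n : ℕ} (hn : n ≠ 0) :
    b ^ n * c ∣ b ^ n := by
  obtain ⟨k, rfl⟩ := Nat.exists_eq_succ_of_ne_zero hn
  rw [pow_succ, mul_assoc]
  exact mul_dvd_mul_left _ h

end Monoid

section StarMonoid

variable {M : Type*} [Monoid M] [StarMul M]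

theorem setOf_exists_eq_mul_left_eq_iff {x b : M} :
    {y | ∃ r, y = r * x} = {y | ∃ r, y = r * b} ↔ star b ∣ star x ∧ star x ∣ star b := by
  have key : ∀ {x y : M}, (∃ r, y = r * x) ↔ star x ∣ star y := fun {x y} =>
    ⟨fun ⟨r, h⟩ => ⟨star r, by rw [h, star_mul]⟩,
      fun ⟨r, h⟩ => ⟨star r, by rw [← star_star y, h, star_mul, star_star]⟩⟩
  simp only [key]
  refine ⟨fun h => ⟨?_, ?_⟩, fun ⟨hbx, hxb⟩ => ?_⟩
  · exact (Set.ext_iff.1 h x).1 (dvd_refl _)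
  · exact (Set.ext_iff.1 h b).2 (dvd_refl _)
  · ext y
    exact ⟨hbx.trans, hxb.trans⟩

theorem exists_mul_eq_one_iff_exists_star_mul_eq_one {x : M} :
    (∃ w, w * x = 1) ↔ ∃ w, star x * w = 1 :=
  ⟨fun ⟨w, h⟩ => ⟨star w, by rw [← star_mul, h, star_one]⟩,
    fun ⟨w, h⟩ => ⟨star w, by rw [← star_star x, ← star_mul, h, star_one]⟩⟩

variable {a : M}

theorem mul_star_pow_mul_dvd_self (h₁ : star a * a ∣ star a) (h₂ : a * star a ∣ a)
    (h₄ : star a * star a ∣ star a) {n : ℕ} (hn : n ≠ 0) : a * star a ^ n * a ∣ a :=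
  calc a * star a ^ n * a = a * (star a ^ n * a) := mul_assoc _ _ _
    _ ∣ a * star a ^ n := mul_dvd_mul_left a (pow_mul_dvd_pow_of_mul_dvd h₁ hn)
    _ ∣ a * star a := mul_dvd_mul_left a (pow_dvd_self_of_mul_self_dvd h₄ hn)
    _ ∣ a := h₂

theorem mul_star_mul_star_dvd_self_of_mul_star_pow_mul_dvd {n : ℕ} (hn : 2 ≤ n)
    (h : a * star a ^ n * a ∣ a) : a * star a * star a ∣ a := by
  obtain ⟨k, rfl⟩ := Nat.exists_eq_add_of_le hn
  calc a * star a * star a ∣ a * star a ^ (2 + k) :=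
        ⟨star a ^ k, by rw [pow_add, pow_two]; simp only [mul_assoc]⟩
    _ ∣ a * star a ^ (2 + k) * a := dvd_mul_right _ _
    _ ∣ a := h

theorem star_mul_star_dvd_star_of_mul_star_mul_star_dvd (h : a * star a * star a ∣ a) :
    star a * star a ∣ star a := by
  obtain ⟨w, hw⟩ := h
  have hw' : star a = star w * a * a * star a := by
    simpa only [star_mul, star_star, mul_assoc] using congrArg star hw
  refine ⟨w * star a, ?_⟩
  calc star a = star w * a * a * star a := hw'
    _ = star w * a * (a * star a * star a * w) * star a := by rw [← hw]
    _ = (star w * a * a * star a) * star a * (w * star a) := by simp only [mul_assoc]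
    _ = star a * star a * (w * star a) := by rw [← hw']

theorem mul_star_pow_mul_dvd_and_star_mul_pow_mul_dvd_iff {n : ℕ} (hn : 2 ≤ n) :
    (a * star a ^ n * a ∣ a ∧ star a * a ^ n * star a ∣ star a) ↔
      (star a * a ∣ star a ∧ a * a ∣ a) ∧ (a * star a ∣ a ∧ star a * star a ∣ star a) := by
  constructor
  · rintro ⟨h, h'⟩
    have hK := mul_star_mul_star_dvd_self_of_mul_star_pow_mul_dvd hn h
    have hK' := mul_star_mul_star_dvd_self_of_mul_star_pow_mul_dvd (a := star a) hn
      (by rwa [star_star])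
    have h₁ := (dvd_mul_right _ _).trans hK'
    have h₃ := star_mul_star_dvd_star_of_mul_star_mul_star_dvd hK'
    rw [star_star] at h₁ h₃
    exact ⟨⟨h₁, h₃⟩,
      (dvd_mul_right _ _).trans hK, star_mul_star_dvd_star_of_mul_star_mul_star_dvd hK⟩
  · rintro ⟨⟨h₁, h₃⟩, h₂, h₄⟩
    have hn0 : n ≠ 0 := by omega
    refine ⟨mul_star_pow_mul_dvd_self h₁ h₂ h₄ hn0, ?_⟩
    have h := mul_star_pow_mul_dvd_self (a := star a) (by rwa [star_star])
      (by rwa [star_star]) (by rwa [star_star]) hn0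
    rwa [star_star] at h

end StarMonoid

section Ring

variable {R : Type*} [Ring R]

theorem exists_one_add_mul_mul_eq_one_swap {x y : R} (h : ∃ w, (1 + x * y) * w = 1) :
    ∃ w, (1 + y * x) * w = 1 := by
  obtain ⟨w, hw⟩ := h
  refine ⟨1 - y * w * x, ?_⟩
  calc (1 + y * x) * (1 - y * w * x) = 1 + y * x - y * ((1 + x * y) * w) * x := by noncomm_ring
    _ = 1 := by rw [hw]; noncomm_ring

theorem exists_mul_one_add_mul_eq_one_swap {x y : R} (h : ∃ w, w * (1 + x * y) = 1) :
    ∃ w, w * (1 + y * x) = 1 := by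
  obtain ⟨w, hw⟩ := h
  refine ⟨1 - y * w * x, ?_⟩
  calc (1 - y * w * x) * (1 + y * x) = 1 + y * x - y * (w * (1 + x * y)) * x := by noncomm_ring
    _ = 1 := by rw [hw]; noncomm_ring

theorem exists_mul_one_add_mul_eq_one_comm {x y : R} :
    (∃ w, w * (1 + x * y) = 1) ↔ ∃ w, w * (1 + y * x) = 1 :=
  ⟨exists_mul_one_add_mul_eq_one_swap, exists_mul_one_add_mul_eq_one_swap⟩

theorem isUnit_one_add_mul_comm {x y : R} : IsUnit (1 + x * y) ↔ IsUnit (1 + y * x) := by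
  simp only [isUnit_iff_exists_and_exists]
  exact ⟨fun ⟨hr, hl⟩ => ⟨exists_one_add_mul_mul_eq_one_swap hr,
      exists_mul_one_add_mul_eq_one_swap hl⟩,
    fun ⟨hr, hl⟩ => ⟨exists_one_add_mul_mul_eq_one_swap hr,
      exists_mul_one_add_mul_eq_one_swap hl⟩⟩

theorem exists_mul_eq_one_iff_mul_mul_dvd {a c d : R} (hc : a * c * a = a) :
    (∃ w, (d * a + 1 - c * a) * w = 1) ↔ a * d * a ∣ a := by
  constructor
  · rintro ⟨w, hw⟩
    refine ⟨w, ?_⟩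
    calc a = a * ((d * a + 1 - c * a) * w) := by rw [hw, mul_one]
      _ = (a * d * a + a - a * c * a) * w := by noncomm_ring
      _ = a * d * a * w := by rw [hc, add_sub_cancel_right]
  · rintro ⟨m, hm⟩
    refine ⟨c * a * m + (1 - c * a) * (1 - d * a * m), ?_⟩
    calc (d * a + 1 - c * a) * (c * a * m + (1 - c * a) * (1 - d * a * m))
        = c * a * m + (d - c) * (a * c * a) * m
          + (1 - c * a + (d - c) * a - (d - c) * (a * c * a)) * (1 - d * a * m) := by
          noncomm_ring
      _ = 1 - c * a + c * (a * d * a * m) := by rw [hc]; noncomm_ring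
      _ = 1 := by rw [← hm]; noncomm_ring

end Ring

section CoreInverse

variable {R : Type*} [Ring R] [StarRing R] {a : R}

theorem isCoreInverse_iff {x : R} :
    IsCoreInverse a x ↔ a * x * a = a ∧ (a ∣ x ∧ x ∣ a) ∧ (a ∣ star x ∧ star x ∣ a) := by
  simp only [IsCoreInverse, setOf_exists_eq_mul_eq_iff, setOf_exists_eq_mul_left_eq_iff,
    star_star]

theorem isDualCoreInverse_iff {y : R} :
    IsDualCoreInverse a y ↔
      a * y * a = a ∧ (star a ∣ star y ∧ star y ∣ star a) ∧ (star a ∣ y ∧ y ∣ star a) := by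
  simp only [IsDualCoreInverse, setOf_exists_eq_mul_eq_iff, setOf_exists_eq_mul_left_eq_iff]

theorem isCoreInverse_star_iff {x : R} :
    IsCoreInverse (star a) x ↔ IsDualCoreInverse a (star x) := by
  have h : star a * x * star a = star a ↔ a * star x * a = a := by
    rw [← star_inj]
    simp only [star_mul, star_star, mul_assoc]
  rw [isCoreInverse_iff, isDualCoreInverse_iff, h, star_star]

theorem IsCoreInverse.star_mul_dvd_star {x : R} (h : IsCoreInverse a x) :
    star a * a ∣ star a := by
  obtain ⟨hxa, -, ⟨s, hs⟩, -⟩ := isCoreInverse_iff.1 h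
  refine ⟨s * star a, ?_⟩
  calc star a = star (a * x * a) := by rw [hxa]
    _ = star a * star x * star a := by simp only [star_mul, mul_assoc]
    _ = star a * a * (s * star a) := by rw [hs]; simp only [mul_assoc]

theorem IsCoreInverse.mul_self_dvd {x : R} (h : IsCoreInverse a x) : a * a ∣ a := by
  obtain ⟨hxa, ⟨⟨p, hp⟩, -⟩, -⟩ := isCoreInverse_iff.1 h
  exact ⟨p * a, by rw [← mul_assoc, mul_assoc a a p, ← hp, hxa]⟩

theorem exists_isCoreInverse (h₁ : star a * a ∣ star a) (h₃ : a * a ∣ a)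
    (h₄ : star a * star a ∣ star a) : ∃ x, IsCoreInverse a x := by
  obtain ⟨r, hr⟩ := h₁
  obtain ⟨p, hp⟩ := h₃
  obtain ⟨w, hw⟩ := h₄
  have hr' : a = star r * star a * a := by
    simpa only [star_mul, star_star, mul_assoc] using congrArg star hr
  have hw' : a = star w * a * a := by
    simpa only [star_mul, star_star, mul_assoc] using congrArg star hw
  -- `a * r` is a hermitian idempotent, `r` a {1,3}-inverse and `star w * a = a^# a`;
  -- the core inverse is `a^# a r`.
  have har : a * r = star r * star a := by
    calc a * r = star r * (star a * a * r) := by rw [← mul_assoc, ← mul_assoc, ← hr']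
      _ = star r * star a := by rw [← hr]
  have hara : a * r * a = a := by rw [har, ← hr']
  have hwa : star w * a = a * p := by
    calc star w * a = star w * (a * a * p) := by rw [← hp]
      _ = a * p := by rw [← mul_assoc, ← mul_assoc, ← hw']
  have hax : a * (star w * a * r) = a * r := by
    rw [hwa, ← mul_assoc, ← mul_assoc, ← hp]
  refine ⟨star w * a * r, isCoreInverse_iff.2 ⟨?_, ⟨?_, ?_⟩, ⟨?_, ?_⟩⟩⟩
  · rw [hax, hara]
  · exact ⟨p * r, by rw [hwa, mul_assoc]⟩
  · refine ⟨a * a, ?_⟩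
    rw [show star w * a * r * (a * a) = star w * (a * r * a) * a by simp only [mul_assoc], hara,
      ← hw']
  · refine ⟨r * w, ?_⟩
    simp only [star_mul, star_star]
    rw [← mul_assoc, ← har, mul_assoc]
  · refine ⟨star a * a, ?_⟩
    calc a = a * r * a := hara.symm
      _ = star (a * (star w * a * r)) * a := by rw [hax, star_mul, ← har]
      _ = star (star w * a * r) * (star a * a) := by rw [star_mul, mul_assoc]

theorem exists_isCoreInverse_and_exists_isDualCoreInverse_iff :
    ((∃ x, IsCoreInverse a x) ∧ ∃ y, IsDualCoreInverse a y) ↔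
      (star a * a ∣ star a ∧ a * a ∣ a) ∧ (a * star a ∣ a ∧ star a * star a ∣ star a) := by
  have hdual : (∃ y, IsDualCoreInverse a y) ↔ ∃ x, IsCoreInverse (star a) x :=
    ⟨fun ⟨y, hy⟩ => ⟨star y, isCoreInverse_star_iff.2 ((star_star y).symm ▸ hy)⟩,
      fun ⟨x, hx⟩ => ⟨star x, isCoreInverse_star_iff.1 hx⟩⟩
  rw [hdual]
  constructor
  · rintro ⟨⟨x, hx⟩, ⟨y, hy⟩⟩
    have h₂ := hy.star_mul_dvd_star
    rw [star_star] at h₂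
    exact ⟨⟨hx.star_mul_dvd_star, hx.mul_self_dvd⟩, h₂, hy.mul_self_dvd⟩
  · rintro ⟨⟨h₁, h₃⟩, h₂, h₄⟩
    refine ⟨exists_isCoreInverse h₁ h₃ h₄, exists_isCoreInverse ?_ h₄ ?_⟩ <;>
      rwa [star_star]

end CoreInverse

theorem stmt_16 {R : Type*} [Ring R] [StarRing R] (a c : R) (hreg : a * c * a = a)
    (n : ℕ) (hn : 2 ≤ n) :
    (((∃ x : R, IsCoreInverse a x) ∧ (∃ y : R, IsDualCoreInverse a y)) ↔
      IsUnit ((star a) ^ n * a + 1 - c * a)) ∧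
    (IsUnit ((star a) ^ n * a + 1 - c * a) ↔
      IsUnit (a * (star a) ^ n + 1 - a * c)) := by
  have hu : (star a) ^ n * a + 1 - c * a = 1 + (star a ^ n - c) * a := by noncomm_ring
  have hv : a * (star a) ^ n + 1 - a * c = 1 + a * (star a ^ n - c) := by noncomm_ring
  have hstar_reg : star a * star c * star a = star a := by
    simpa only [star_mul, mul_assoc] using congrArg star hreg
  have hv_left : (∃ w, w * (a * (star a) ^ n + 1 - a * c) = 1) ↔
      star a * a ^ n * star a ∣ star a := by
    rw [exists_mul_eq_one_iff_exists_star_mul_eq_one]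
    simpa only [star_sub, star_add, star_mul, star_one, star_pow, star_star] using
      exists_mul_eq_one_iff_mul_mul_dvd (d := a ^ n) hstar_reg
  refine ⟨?_, by rw [hu, hv, isUnit_one_add_mul_comm]⟩
  rw [isUnit_iff_exists_and_exists, exists_mul_eq_one_iff_mul_mul_dvd hreg, hu,
    exists_mul_one_add_mul_eq_one_comm, ← hv, hv_left,
    mul_star_pow_mul_dvd_and_star_mul_pow_mul_dvd_iff hn,
    exists_isCoreInverse_and_exists_isDualCoreInverse_iff]
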